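/- Let g be a continuous distortion function and set α_{n−1} = g((n−1)/n). Then for every α with α_{n−1} < α < 1 and every x ∈ ℝⁿ, the scaled generalized-ES norm equals the maximum absolute entry: ⟨⟨x⟩⟩_α^{S,g} = |x|_(n) = max_{1≤i≤n} |x_i|. -/

import Mathlib

open Finset

/-- The absolute values of the components of `x`, arranged in increasing order:
`absSorted x i` is `|x|_(i+1)` in the paper's notation. -/
noncomputable def absSorted {n : ℕ} (x : Fin n → ℝ) : Fin n → ℝ :=
  fun i => |x (Tuple.sort (fun j => |x j|) i)|

/-- `coeff n g i = g((i+1)/n) - g(i/n)`, the paper's `c_{i+1}`. -/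
noncomputable def coeff (n : ℕ) (g : ℝ → ℝ) (i : Fin n) : ℝ :=
  g (((i : ℕ) + 1 : ℝ) / n) - g (((i : ℕ) : ℝ) / n)

/-- The objective function whose infimum over `t` defines the scaled generalized-ES norm. -/
noncomputable def sgesObj {n : ℕ} (g : ℝ → ℝ) (α : ℝ) (x : Fin n → ℝ) (t : ℝ) : ℝ :=
  t + (1 - α)⁻¹ * ∑ i, coeff n g i * max (absSorted x i - t) 0

/-- The scaled generalized-ES norm `⟨⟨x⟩⟩_α^{S,g}`. -/
noncomputable def sges {n : ℕ} (g : ℝ → ℝ) (α : ℝ) (x : Fin n → ℝ) : ℝ :=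
  ⨅ t : ℝ, sgesObj g α x t

/-- The non-scaled generalized-ES norm `⟨⟨x⟩⟩_α^{g} = n(1-α)⟨⟨x⟩⟩_α^{S,g}`. -/
noncomputable def nges {n : ℕ} (g : ℝ → ℝ) (α : ℝ) (x : Fin n → ℝ) : ℝ :=
  (n : ℝ) * (1 - α) * sges g α x

/-- The dual norm of a (norm) functional `N` on `ℝⁿ`. -/
noncomputable def dualNorm {n : ℕ} (N : (Fin n → ℝ) → ℝ) (y : Fin n → ℝ) : ℝ :=
  sSup {r : ℝ | ∃ x : Fin n → ℝ, N x ≤ 1 ∧ r = ∑ i, x i * y i}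

/-- The ordered weighted L1 (OWL) norm. -/
noncomputable def owl {n : ℕ} (w : Fin n → ℝ) (x : Fin n → ℝ) : ℝ :=
  ∑ i, w i * absSorted x i

/-! For `t` below the top entry `|x|₍ₙ₎`, the last summand alone already contributes
`(1 - α)⁻¹ c_n (|x|₍ₙ₎ - t) ≥ |x|₍ₙ₎ - t`, because `c_n = 1 - g((n-1)/n) > 1 - α`; all other
summands are nonnegative since `g` is increasing. Hence the objective is at least `|x|₍ₙ₎`
everywhere, and it equals `|x|₍ₙ₎` at `t = |x|₍ₙ₎`, where every summand vanishes. -/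

section AbsSorted

variable {n : ℕ} (x : Fin n → ℝ)

theorem absSorted_monotone : Monotone (absSorted x) :=
  Tuple.monotone_sort fun j => |x j|

theorem iSup_absSorted : ⨆ i, absSorted x i = ⨆ i, |x i| :=
  (Tuple.sort fun j => |x j|).iSup_comp (g := fun i => |x i|)

theorem absSorted_le_last (hn : 1 ≤ n) (i : Fin n) :
    absSorted x i ≤ absSorted x ⟨n - 1, Nat.sub_lt hn Nat.one_pos⟩ :=
  absSorted_monotone x (Fin.mk_le_mk.mpr (by omega))

theorem iSup_abs_eq_absSorted_last (hn : 1 ≤ n) :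
    ⨆ i, |x i| = absSorted x ⟨n - 1, Nat.sub_lt hn Nat.one_pos⟩ := by
  have : Nonempty (Fin n) := ⟨⟨0, by omega⟩⟩
  rw [← iSup_absSorted]
  exact le_antisymm (ciSup_le (absSorted_le_last x hn))
    (le_ciSup (Set.finite_range _).bddAbove _)

end AbsSorted

section Coeff

variable {n : ℕ} {g : ℝ → ℝ}

theorem coeff_nonneg (hg : MonotoneOn g (Set.Icc 0 1)) (i : Fin n) : 0 ≤ coeff n g i := by
  have hn : (0 : ℝ) < n := by exact_mod_cast i.pos
  have hi : ((i : ℕ) : ℝ) + 1 ≤ n := by exact_mod_cast i.isLt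
  rw [coeff, sub_nonneg]
  refine hg ⟨by positivity, ?_⟩ ⟨by positivity, ?_⟩ (by gcongr; linarith) <;>
    rw [div_le_one hn] <;> linarith

theorem coeff_last (hn : 1 ≤ n) :
    coeff n g ⟨n - 1, Nat.sub_lt hn Nat.one_pos⟩ = g 1 - g (((n : ℝ) - 1) / n) := by
  have hn0 : (n : ℝ) ≠ 0 := by positivity
  simp only [coeff, Nat.cast_sub hn, Nat.cast_one, sub_add_cancel, div_self hn0]

end Coeff

section Objective

variable {n : ℕ} {g : ℝ → ℝ} {α : ℝ} {x : Fin n → ℝ}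

theorem sgesObj_of_absSorted_le {t : ℝ} (ht : ∀ i, absSorted x i ≤ t) :
    sgesObj g α x t = t := by
  simp [sgesObj, sub_nonpos.mpr (ht _)]

theorem absSorted_le_sgesObj (hc : ∀ i, 0 ≤ coeff n g i) (hα : α < 1) {j : Fin n}
    (hj : 1 - α ≤ coeff n g j) (t : ℝ) : absSorted x j ≤ sgesObj g α x t := by
  have hα' : 0 < 1 - α := sub_pos.mpr hα
  have hsingle : coeff n g j * max (absSorted x j - t) 0 ≤
      ∑ i, coeff n g i * max (absSorted x i - t) 0 :=
    single_le_sum (f := fun i => coeff n g i * max (absSorted x i - t) 0)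
      (fun i _ => mul_nonneg (hc i) (le_max_right _ _)) (mem_univ j)
  have hscale : 1 ≤ (1 - α)⁻¹ * coeff n g j := by rwa [le_inv_mul_iff₀ hα', mul_one]
  calc absSorted x j ≤ t + max (absSorted x j - t) 0 := by
        linarith [le_max_left (absSorted x j - t) 0]
    _ ≤ t + (1 - α)⁻¹ * coeff n g j * max (absSorted x j - t) 0 := by
        grw [← le_mul_of_one_le_left (le_max_right _ _) hscale]
    _ = t + (1 - α)⁻¹ * (coeff n g j * max (absSorted x j - t) 0) := by ring
    _ ≤ sgesObj g α x t := by
        unfold sgesObj; gcongr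

theorem sges_eq_absSorted (hc : ∀ i, 0 ≤ coeff n g i) (hα : α < 1) {j : Fin n}
    (hj : 1 - α ≤ coeff n g j) (hmax : ∀ i, absSorted x i ≤ absSorted x j) :
    sges g α x = absSorted x j :=
  le_antisymm
    ((ciInf_le ⟨_, Set.forall_mem_range.mpr (absSorted_le_sgesObj hc hα hj)⟩ _).trans_eq
      (sgesObj_of_absSorted_le hmax))
    (le_ciInf (absSorted_le_sgesObj hc hα hj))

end Objective

/-- for `g((n-1)/n) < α < 1`, the scaled generalized-ES norm equals the
largest sorted absolute entry `|x|₍ₙ₎`, i.e. the maximum absolute entry. -/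
theorem stmt8 (n : ℕ) (hn : 1 ≤ n) (g : ℝ → ℝ)
    (hg_mono : MonotoneOn g (Set.Icc 0 1)) (hg1 : g 1 = 1)
    (α : ℝ) (hα1 : g (((n : ℝ) - 1) / n) < α) (hα2 : α < 1) (x : Fin n → ℝ) :
    sges g α x = absSorted x ⟨n - 1, by omega⟩ ∧
      sges g α x = ⨆ i, |x i| := by
  have hlast : 1 - α ≤ coeff n g ⟨n - 1, Nat.sub_lt hn Nat.one_pos⟩ := by
    rw [coeff_last hn, hg1]; linarith
  have hsges := sges_eq_absSorted (coeff_nonneg hg_mono) hα2 hlast (absSorted_le_last x hn)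
  exact ⟨hsges, hsges.trans (iSup_abs_eq_absSorted_last x hn).symm⟩
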